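/- Inverse-probability-weighting identity: Let X and Π be independent random variables with Π taking values in a finite set Pol, and Y an integrable random variable. Let Π' : 𝒳 → Set(Pol) be any function assigning a (possibly empty) set of policies to each covariate value, and let 𝒳' ⊆ 𝒳 be such that P(Π ∈ Π'(x)) > 0 for every x ∈ 𝒳'. Then E[ Y · 1{Π ∈ Π'(X)} / P(Π ∈ Π'(X)) · 1{X ∈ 𝒳'} ] = E[ E[Y | Π ∈ Π'(X), X] · 1{X ∈ 𝒳'} ], where the inner conditional expectation at X = x is E[Y | X = x, Π ∈ Π'(x)]. -/

import Mathlib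

open MeasureTheory

/-- Conditional mean of `Y` given the event `D`: `E[Y · 1_D] / P(D)`. -/
noncomputable def condMean {Ω : Type*} [MeasurableSpace Ω] (μ : Measure Ω)
    (Y : Ω → ℝ) (D : Set Ω) : ℝ :=
  (∫ ω in D, Y ω ∂μ) / (μ D).toReal

/-!
Split both integrals along the fibres `{X = x}`, `x ∈ 𝒳'`. On a fibre the weighted integrand
integrates to `E[Y; X = x, Π ∈ Π'(x)] / P(Π ∈ Π'(x))`, while the constant `condMean` integrates to
`E[Y; X = x, Π ∈ Π'(x)] / P(X = x, Π ∈ Π'(x)) · P(X = x)`; independence of `X` and `Π`, extended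
from single policies to the finite set `Π'(x)`, makes the two denominators agree.
-/

section

variable {Ω 𝒳 β : Type*} [MeasurableSpace Ω] {μ : Measure Ω}

theorem measurableSet_setOf_mem_finset {P : Ω → β} (hP : ∀ p, MeasurableSet {ω | P ω = p})
    (s : Finset β) : MeasurableSet {ω | P ω ∈ s} := by
  have hfib : {ω | P ω ∈ s} = ⋃ p ∈ s, {ω | P ω = p} := by ext; simp
  rw [hfib]
  exact s.measurableSet_biUnion fun p _ => hP p

theorem measure_inter_setOf_mem_finset_eq_mul {A : Set Ω} {P : Ω → β}
    (hP : ∀ p, MeasurableSet {ω | P ω = p})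
    (hindep : ∀ p, μ (A ∩ {ω | P ω = p}) = μ A * μ {ω | P ω = p}) (s : Finset β) :
    μ (A ∩ {ω | P ω ∈ s}) = μ A * μ {ω | P ω ∈ s} := by
  have hsum : ∀ ν : Measure Ω, ν {ω | P ω ∈ s} = ∑ p ∈ s, ν {ω | P ω = p} :=
    fun ν => (sum_measure_preimage_singleton s fun p _ => hP p).symm
  rw [Set.inter_comm, ← Measure.restrict_apply (measurableSet_setOf_mem_finset hP s), hsum,
    hsum, Finset.mul_sum]
  refine Finset.sum_congr rfl fun p _ => ?_
  rw [Measure.restrict_apply (hP p), Set.inter_comm, hindep]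

theorem integral_mul_ite_mem_eq_sum_setIntegral [DecidableEq 𝒳] {X : Ω → 𝒳}
    (hX : ∀ x, MeasurableSet {ω | X ω = x}) (s : Finset 𝒳) (f : 𝒳 → Ω → ℝ)
    (hf : ∀ x ∈ s, Integrable (f x) μ) :
    ∫ ω, f (X ω) ω * (if X ω ∈ s then 1 else 0) ∂μ
      = ∑ x ∈ s, ∫ ω in {ω | X ω = x}, f x ω ∂μ := by
  have hfib : ∀ ω, f (X ω) ω * (if X ω ∈ s then 1 else 0)
      = ∑ x ∈ s, {ω | X ω = x}.indicator (f x) ω := by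
    intro ω
    simp only [Set.indicator_apply, Set.mem_ofPred_eq, mul_ite, mul_one, mul_zero]
    rw [Finset.sum_ite_eq]
  simp_rw [hfib]
  rw [integral_finsetSum s fun x hx => (hf x hx).indicator (hX x)]
  exact Finset.sum_congr rfl fun x _ => integral_indicator (hX x)

theorem condMean_inter_mul_measureReal [IsFiniteMeasure μ] (Y : Ω → ℝ) {A B : Set Ω}
    (hAB : μ (A ∩ B) = μ A * μ B) (hB : μ B ≠ 0) :
    condMean μ Y (A ∩ B) * μ.real A = (∫ ω in A ∩ B, Y ω ∂μ) / μ.real B := by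
  by_cases hA : μ A = 0
  · have hnull : μ (A ∩ B) = 0 := by rw [hAB, hA, zero_mul]
    simp [condMean, setIntegral_measure_zero Y hnull, measureReal_def, hA]
  · have hA' : (μ A).toReal ≠ 0 := ENNReal.toReal_ne_zero.2 ⟨hA, measure_ne_top μ A⟩
    have hB' : (μ B).toReal ≠ 0 := ENNReal.toReal_ne_zero.2 ⟨hB, measure_ne_top μ B⟩
    rw [condMean, hAB, ENNReal.toReal_mul, measureReal_def, measureReal_def]
    field_simp

end

theorem stmt11_general {Ω 𝒳 Pol : Type*} [DecidableEq 𝒳]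
    [DecidableEq Pol]
    [MeasurableSpace Ω] (μ : Measure Ω) [IsProbabilityMeasure μ]
    (X : Ω → 𝒳) (P : Ω → Pol) (Y : Ω → ℝ)
    (hXmeas : ∀ x, MeasurableSet {ω | X ω = x})
    (hPmeas : ∀ p, MeasurableSet {ω | P ω = p})
    (hYint : Integrable Y μ)
    (hindep : ∀ (x : 𝒳) (p : Pol),
      μ ({ω | X ω = x} ∩ {ω | P ω = p}) = μ {ω | X ω = x} * μ {ω | P ω = p})
    (Pi' : 𝒳 → Finset Pol) (𝒳' : Finset 𝒳)
    (hpos : ∀ x ∈ 𝒳', 0 < μ {ω | P ω ∈ Pi' x}) :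
    (∫ ω, Y ω * ((if P ω ∈ Pi' (X ω) then (1 : ℝ) else 0)
          / (μ {ω' | P ω' ∈ Pi' (X ω)}).toReal)
        * (if X ω ∈ 𝒳' then (1 : ℝ) else 0) ∂μ)
      = ∫ ω, condMean μ Y ({ω' | X ω' = X ω} ∩ {ω' | P ω' ∈ Pi' (X ω)})
          * (if X ω ∈ 𝒳' then (1 : ℝ) else 0) ∂μ := by
  have hB : ∀ x, MeasurableSet {ω | P ω ∈ Pi' x} := fun x =>
    measurableSet_setOf_mem_finset hPmeas (Pi' x)
  have hweight : ∀ ω, Y ω * ((if P ω ∈ Pi' (X ω) then (1 : ℝ) else 0)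
        / (μ {ω' | P ω' ∈ Pi' (X ω)}).toReal)
      = {ω' | P ω' ∈ Pi' (X ω)}.indicator Y ω / (μ {ω' | P ω' ∈ Pi' (X ω)}).toReal := by
    intro ω
    simp [Set.indicator_apply, mul_div_assoc']
  simp only [hweight]
  rw [integral_mul_ite_mem_eq_sum_setIntegral hXmeas 𝒳'
      (fun x ω => {ω' | P ω' ∈ Pi' x}.indicator Y ω / (μ {ω' | P ω' ∈ Pi' x}).toReal)
      fun x _ => (hYint.indicator (hB x)).div_const _,
    integral_mul_ite_mem_eq_sum_setIntegral hXmeas 𝒳'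
      (fun x _ => condMean μ Y ({ω | X ω = x} ∩ {ω' | P ω' ∈ Pi' x}))
      fun x _ => integrable_const _]
  refine Finset.sum_congr rfl fun x hx => ?_
  rw [integral_div, setIntegral_indicator (hB x), setIntegral_const, smul_eq_mul, mul_comm,
    condMean_inter_mul_measureReal Y
      (measure_inter_setOf_mem_finset_eq_mul hPmeas (hindep x) (Pi' x)) (hpos x hx).ne',
    measureReal_def]

/-- Inverse-probability-weighting identity:
`E[Y · 1{Π ∈ Pi'(X)} / P(Π ∈ Pi'(X)) · 1{X ∈ 𝒳'}] = E[E[Y ∣ Π ∈ Pi'(X), X] · 1{X ∈ 𝒳'}]`. -/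
theorem stmt11 {Ω 𝒳 Pol : Type*} [Fintype 𝒳] [DecidableEq 𝒳]
    [Fintype Pol] [DecidableEq Pol]
    [MeasurableSpace Ω] (μ : Measure Ω) [IsProbabilityMeasure μ]
    (X : Ω → 𝒳) (P : Ω → Pol) (Y : Ω → ℝ)
    (hXmeas : ∀ x, MeasurableSet {ω | X ω = x})
    (hPmeas : ∀ p, MeasurableSet {ω | P ω = p})
    (hYint : Integrable Y μ)
    (hindep : ∀ (x : 𝒳) (p : Pol),
      μ ({ω | X ω = x} ∩ {ω | P ω = p}) = μ {ω | X ω = x} * μ {ω | P ω = p})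
    (Pi' : 𝒳 → Finset Pol) (𝒳' : Finset 𝒳)
    (hpos : ∀ x ∈ 𝒳', 0 < μ {ω | P ω ∈ Pi' x}) :
    (∫ ω, Y ω * ((if P ω ∈ Pi' (X ω) then (1 : ℝ) else 0)
          / (μ {ω' | P ω' ∈ Pi' (X ω)}).toReal)
        * (if X ω ∈ 𝒳' then (1 : ℝ) else 0) ∂μ)
      = ∫ ω, condMean μ Y ({ω' | X ω' = X ω} ∩ {ω' | P ω' ∈ Pi' (X ω)})
          * (if X ω ∈ 𝒳' then (1 : ℝ) else 0) ∂μ :=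
  stmt11_general μ X P Y hXmeas hPmeas hYint hindep Pi' 𝒳' hpos
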